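/- Every element S of G can be written as S = W ∘ P, where W ∈ G is a unitary operator on the Hilbert space H ⊕ ℂ and P ∈ G is a self-adjoint (indeed positive) operator on H ⊕ ℂ. -/

import Mathlib

/-!
Write `J (x, λ) = (x, -λ)`, so that `𝒜(v, w) = ⟪w, J v⟫` and `S` lies in `G` exactly when it is
invertible with `S⋆ J S = J`. Then `S⁻¹ = J S⋆ J`, hence `(S⋆ S)⁻¹ = J (S⋆ S) J`. Conjugation by
the self-adjoint involution `J` commutes with square roots, so `P = √(S⋆ S)` satisfies
`P⁻¹ = J P J`, i.e. `P J P = J`, and `P ∈ G`. Finally `W = S P⁻¹` is the unitary factor of the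
polar decomposition of the invertible `S`, and it lies in `G` as a product of elements of `G`.
-/

open scoped InnerProductSpace ComplexConjugate

noncomputable section

variable {H : Type*} [NormedAddCommGroup H] [InnerProductSpace ℂ H]

/-- The sesquilinear form `𝒜((x,λ),(y,μ)) = ⟨x,y⟩ − λ·conj(μ)` on `H ⊕ ℂ`, where `⟨·,·⟩` is
linear in the first variable and conjugate-linear in the second (so `⟨x,y⟩ = ⟪y,x⟫_ℂ` in
Mathlib's convention). -/
def formA (v w : WithLp 2 (H × ℂ)) : ℂ :=
  ⟪(WithLp.equiv 2 (H × ℂ) w).1, (WithLp.equiv 2 (H × ℂ) v).1⟫_ℂ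
    - (WithLp.equiv 2 (H × ℂ) v).2 * conj (WithLp.equiv 2 (H × ℂ) w).2

/-- Membership in the group `G` of bijective bounded operators on `H ⊕ ℂ` preserving `𝒜`. -/
def memG (S : WithLp 2 (H × ℂ) →L[ℂ] WithLp 2 (H × ℂ)) : Prop :=
  Function.Bijective S ∧ ∀ v w : WithLp 2 (H × ℂ), formA (S v) (S w) = formA v w

open scoped Ring

section StarMonoid

variable {R : Type*} [MonoidWithZero R] [StarMul R] {J S : R}

lemma mul_mul_star_eq_of_star_mul_mul_eq (hJJ : J * J = 1) (hS : IsUnit S)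
    (h : star S * J * S = J) : S * J * star S = J := by
  have hleft : J * star S * J * S = 1 := by
    rw [mul_assoc, mul_assoc, ← mul_assoc (star S) J S, h, hJJ]
  have hright : S * (J * star S * J) = 1 := by
    rw [← hS.mul_left_inj, one_mul, mul_assoc, hleft, mul_one]
  calc S * J * star S = S * (J * star S * J) * J := by simp only [mul_assoc, hJJ, mul_one]
    _ = J := by rw [hright, one_mul]

lemma Ring.inverse_star_mul_self_of_star_mul_mul_eq (hJJ : J * J = 1) (hS : IsUnit S)
    (h : star S * J * S = J) : (star S * S)⁻¹ʳ = J * (star S * S) * J := by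
  rw [← mul_one (star S * S)⁻¹ʳ, Ring.inverse_mul_eq_iff_eq_mul _ _ _ (hS.star.mul hS)]
  calc (1 : R) = J * J := hJJ.symm
    _ = star S * (S * J * star S) * S * J := by
      rw [mul_mul_star_eq_of_star_mul_mul_eq hJJ hS h, h]
    _ = star S * S * (J * (star S * S) * J) := by simp only [mul_assoc]

end StarMonoid

section CStarAlgebra

variable {A : Type*} [CStarAlgebra A] [PartialOrder A] [StarOrderedRing A] {J S : A}

lemma CFC.sqrt_conj_of_mul_self_eq_one (hJ : IsSelfAdjoint J) (hJJ : J * J = 1) {a : A}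
    (ha : 0 ≤ a) : CFC.sqrt (J * a * J) = J * CFC.sqrt a * J := by
  refine CFC.sqrt_unique ?_ (hJ.conjugate_nonneg (CFC.sqrt_nonneg a))
  calc J * CFC.sqrt a * J * (J * CFC.sqrt a * J)
      = J * (CFC.sqrt a * (J * J) * CFC.sqrt a) * J := by simp only [mul_assoc]
    _ = J * a * J := by rw [hJJ, mul_one, CFC.sqrt_mul_sqrt_self a ha]

lemma CFC.isUnit_sqrt_star_mul_self (hS : IsUnit S) : IsUnit (CFC.sqrt (star S * S)) :=
  (CFC.isUnit_sqrt_iff _).mpr (hS.star.mul hS)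

lemma CFC.sqrt_star_mul_self_mul_mul_self_of_star_mul_mul_eq (hJ : IsSelfAdjoint J)
    (hJJ : J * J = 1) (hS : IsUnit S) (h : star S * J * S = J) :
    CFC.sqrt (star S * S) * J * CFC.sqrt (star S * S) = J := by
  set P := CFC.sqrt (star S * S)
  have hJPJ : J * P * J = P⁻¹ʳ := by
    rw [← CFC.sqrt_ringInverse, Ring.inverse_star_mul_self_of_star_mul_mul_eq hJJ hS h,
      CFC.sqrt_conj_of_mul_self_eq_one hJ hJJ (star_mul_self_nonneg S)]
  calc P * J * P = P * (J * P * J) * J := by simp only [mul_assoc, hJJ, mul_one]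
    _ = J := by rw [hJPJ, Ring.mul_inverse_cancel _ (CFC.isUnit_sqrt_star_mul_self hS), one_mul]

lemma mul_inverse_sqrt_star_mul_self_mem_unitary (hS : IsUnit S) :
    S * (CFC.sqrt (star S * S))⁻¹ʳ ∈ unitary A := by
  set P := CFC.sqrt (star S * S)
  have hP : IsUnit P := CFC.isUnit_sqrt_star_mul_self hS
  have hPP : P * P = star S * S := CFC.sqrt_mul_sqrt_self _ (star_mul_self_nonneg S)
  rw [(hS.mul hP.ringInverse).mem_unitary_iff_star_mul_self, star_mul,
    (IsSelfAdjoint.of_nonneg (CFC.sqrt_nonneg _)).ringInverse.star_eq]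
  calc P⁻¹ʳ * star S * (S * P⁻¹ʳ) = P⁻¹ʳ * (P * P) * P⁻¹ʳ := by rw [hPP]; simp only [mul_assoc]
    _ = 1 := by rw [Ring.inverse_mul_cancel_left _ _ hP, Ring.mul_inverse_cancel _ hP]

theorem exists_unitary_mul_nonneg_of_star_mul_mul_eq (hJ : IsSelfAdjoint J) (hJJ : J * J = 1)
    (hS : IsUnit S) (h : star S * J * S = J) :
    ∃ W P : A, W ∈ unitary A ∧ star W * J * W = J ∧
      IsUnit P ∧ 0 ≤ P ∧ star P * J * P = J ∧ S = W * P := by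
  set P := CFC.sqrt (star S * S)
  have hP : IsUnit P := CFC.isUnit_sqrt_star_mul_self hS
  have hPsa : IsSelfAdjoint P := .of_nonneg (CFC.sqrt_nonneg _)
  have hPJP : P * J * P = J :=
    CFC.sqrt_star_mul_self_mul_mul_self_of_star_mul_mul_eq hJ hJJ hS h
  refine ⟨S * P⁻¹ʳ, P, mul_inverse_sqrt_star_mul_self_mem_unitary hS, ?_, hP,
    CFC.sqrt_nonneg _, by rw [hPsa.star_eq, hPJP], (Ring.inverse_mul_cancel_right _ _ hP).symm⟩
  calc star (S * P⁻¹ʳ) * J * (S * P⁻¹ʳ) = P⁻¹ʳ * (star S * J * S) * P⁻¹ʳ := by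
        simp only [star_mul, hPsa.ringInverse.star_eq, mul_assoc]
    _ = P⁻¹ʳ * (P * J * P) * P⁻¹ʳ := by rw [h, hPJP]
    _ = J := by
      simp only [mul_assoc, Ring.inverse_mul_cancel_left _ _ hP, Ring.mul_inverse_cancel _ hP,
        mul_one]

end CStarAlgebra

def fundamentalSymmetry : WithLp 2 (H × ℂ) →L[ℂ] WithLp 2 (H × ℂ) :=
  (WithLp.prodContinuousLinearEquiv 2 ℂ H ℂ).symm.toContinuousLinearMap ∘L
    ((ContinuousLinearMap.id ℂ H).prodMap (-ContinuousLinearMap.id ℂ ℂ)) ∘L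
      (WithLp.prodContinuousLinearEquiv 2 ℂ H ℂ).toContinuousLinearMap

@[simp] lemma fundamentalSymmetry_fst (v : WithLp 2 (H × ℂ)) :
    (fundamentalSymmetry v).fst = v.fst := rfl

@[simp] lemma fundamentalSymmetry_snd (v : WithLp 2 (H × ℂ)) :
    (fundamentalSymmetry v).snd = -v.snd := rfl

lemma fundamentalSymmetry_mul_self :
    (fundamentalSymmetry : WithLp 2 (H × ℂ) →L[ℂ] _) * fundamentalSymmetry = 1 := by
  ext v : 1
  rw [WithLp.ext_iff]
  ext <;> simp

lemma formA_eq_inner (v w : WithLp 2 (H × ℂ)) :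
    formA v w = ⟪w, fundamentalSymmetry v⟫_ℂ := by
  simp [formA, WithLp.prod_inner_apply, RCLike.inner_apply, sub_eq_add_neg]

section Complete

variable [CompleteSpace H]

lemma isSelfAdjoint_fundamentalSymmetry :
    IsSelfAdjoint (fundamentalSymmetry : WithLp 2 (H × ℂ) →L[ℂ] _) := by
  rw [ContinuousLinearMap.isSelfAdjoint_iff_isSymmetric]
  intro v w
  simp [WithLp.prod_inner_apply]

lemma formA_map_map_iff (T : WithLp 2 (H × ℂ) →L[ℂ] WithLp 2 (H × ℂ)) :
    (∀ v w, formA (T v) (T w) = formA v w) ↔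
      star T * fundamentalSymmetry * T = fundamentalSymmetry := by
  simp only [formA_eq_inner, ContinuousLinearMap.ext_iff, mul_apply_eq_comp,
    ContinuousLinearMap.star_eq_adjoint, ← ContinuousLinearMap.adjoint_inner_right T]
  exact forall_congr' fun v => ⟨ext_inner_left ℂ, fun h w => by rw [h]⟩

lemma memG_iff {T : WithLp 2 (H × ℂ) →L[ℂ] WithLp 2 (H × ℂ)} :
    memG T ↔ IsUnit T ∧ star T * fundamentalSymmetry * T = fundamentalSymmetry := by
  rw [memG, ContinuousLinearMap.isUnit_iff_bijective, formA_map_map_iff]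

end Complete

/-- Every element `S` of `G` is a composition `S = W ∘ P` with `W ∈ G` unitary on the Hilbert
space `H ⊕ ℂ` and `P ∈ G` self-adjoint (indeed positive) on `H ⊕ ℂ`. -/
theorem stmt5 [CompleteSpace H]
    (S : WithLp 2 (H × ℂ) →L[ℂ] WithLp 2 (H × ℂ)) (hS : memG S) :
    ∃ W P : WithLp 2 (H × ℂ) →L[ℂ] WithLp 2 (H × ℂ),
      memG W ∧ W ∈ unitary (WithLp 2 (H × ℂ) →L[ℂ] WithLp 2 (H × ℂ)) ∧
      memG P ∧ IsSelfAdjoint P ∧ P.IsPositive ∧ S = W ∘L P := by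
  obtain ⟨hSu, hSJ⟩ := memG_iff.mp hS
  obtain ⟨W, P, hWu, hWJ, hPu, hP0, hPJ, rfl⟩ := exists_unitary_mul_nonneg_of_star_mul_mul_eq
    isSelfAdjoint_fundamentalSymmetry fundamentalSymmetry_mul_self hSu hSJ
  exact ⟨W, P, memG_iff.mpr ⟨Unitary.isUnit_coe (U := ⟨W, hWu⟩), hWJ⟩, hWu,
    memG_iff.mpr ⟨hPu, hPJ⟩, .of_nonneg hP0, P.nonneg_iff_isPositive.mp hP0, rfl⟩

end
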